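/- Suppose $n = m(m+1)$ with $m \geq 1$, so $\Delta_n$ is reducible. Then the group of unitary units $U(\Lambda_n)$ of $\Lambda_n = \mathbb{Z}[t,t^{-1}]/(\Delta_n)$ is isomorphic (via $t \mapsto m/(m+1)$, i.e. projection onto the first coordinate of the splitting $\Lambda_n \hookrightarrow \mathbb{Z}[1/n]\oplus\mathbb{Z}[1/n]$) to the group $T = \{x \in \mathbb{Z}[1/n]^\times : x - x^{-1} \in (2m+1)\cdot\mathbb{Z}[1/n]\}$. -/

import Mathlib

open LaurentPolynomial in
/-- `Δₙ = n t² - (2n+1) t + n` as a Laurent polynomial over `ℤ`. -/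
noncomputable def DeltaL (n : ℤ) : LaurentPolynomial ℤ :=
  LaurentPolynomial.C n * T 2 - LaurentPolynomial.C (2 * n + 1) * T 1 + LaurentPolynomial.C n

/-- `Λₙ = ℤ[t,t⁻¹]/(Δₙ)`. -/
abbrev Lam (n : ℤ) := LaurentPolynomial ℤ ⧸ Ideal.span {DeltaL n}

/-- The quotient map `ℤ[t,t⁻¹] → Λₙ`. -/
noncomputable abbrev Qmk (n : ℤ) : LaurentPolynomial ℤ →+* Lam n :=
  Ideal.Quotient.mk (Ideal.span {DeltaL n})

/-- `ℤ[1/n]`, the localization of `ℤ` inverting `n = m(m+1)`. -/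
abbrev ZInv (m : ℤ) := Localization.Away ((m * (m + 1) : ℤ))

/-!
Write `n = m(m+1)`. Then `Δₙ = ((m+1)t - m)(mt - (m+1))`, so evaluation at the roots
`t = m/(m+1)` and `t = (m+1)/m` gives two ring maps `ψ, ψ' : Λₙ → ℤ[1/n]`, exchanged by the
involution `τ`. Jointly they embed `Λₙ` into `ℤ[1/n] ⊕ ℤ[1/n]`: over `ℚ` the two roots are
distinct, and `Δₙ` is primitive, so by Gauss's lemma an integer Laurent polynomial vanishing at
both is divisible by `Δₙ`. Since `(m+1)/m - m/(m+1) = (2m+1)/n`, the image is contained in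
`{(a, b) : 2m+1 ∣ b - a}`, and it is all of it because `ψ` is already onto
(`m/(m+1) + (m+1)/m - 2 = 1/n`) and `(m+1)t - m` lies in the kernel of `ψ` while `ψ'` takes it to
`(2m+1)/m`. A unitary unit `x` is sent to the pair `(ψ x, (ψ x)⁻¹)`, which gives the bijection.
-/

open Polynomial
open LaurentPolynomial hiding C

namespace LaurentPolynomial

variable {R S : Type*} [CommRing R] [CommRing S]

theorem ringHom_ext_int {f g : ℤ[T;T⁻¹] →+* S} (h : f (T 1) = g (T 1)) : f = g :=
  IsLocalization.ringHom_ext (Submonoid.powers (X : ℤ[X])) <|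
    Polynomial.ringHom_ext' (RingHom.ext_int _ _) (by simpa [algebraMap_eq_toLaurent] using h)

theorem map_eval₂_intCast (g : R →+* S) (x : Rˣ) (f : ℤ[T;T⁻¹]) :
    g (eval₂ (Int.castRingHom R) x f) = eval₂ (Int.castRingHom S) (Units.map g x) f :=
  RingHom.congr_fun (f := g.comp _) (ringHom_ext_int (by simp)) f

theorem dvd_eval₂_sub_eval₂ {d : R} {x y : Rˣ} (h : d ∣ (x : R) - y) (f : ℤ[T;T⁻¹]) :
    d ∣ eval₂ (Int.castRingHom R) x f - eval₂ (Int.castRingHom R) y f := by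
  have hxy : Units.map (Ideal.Quotient.mk (Ideal.span {d}) : R →* R ⧸ Ideal.span {d}) x =
      Units.map (Ideal.Quotient.mk (Ideal.span {d}) : R →* R ⧸ Ideal.span {d}) y :=
    Units.ext <| Ideal.Quotient.eq.2 (Ideal.mem_span_singleton.2 h)
  rw [← Ideal.mem_span_singleton, ← Ideal.Quotient.eq, map_eval₂_intCast, map_eval₂_intCast, hxy]

end LaurentPolynomial

theorem IsLocalization.Away.surjective_of_mul_eq_one {A R : Type*} [CommRing A] [CommRing R]
    [Algebra ℤ R] {n : ℤ} [IsLocalization.Away n R] (φ : A →+* R) {u : A} (hu : φ u * n = 1) :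
    Function.Surjective φ := by
  intro z
  obtain ⟨k, a, hz⟩ := IsLocalization.Away.surj n z
  refine ⟨a * u ^ k, ?_⟩
  have hk : (φ u * n) ^ k = 1 := by rw [hu, one_pow]
  rw [eq_intCast, eq_intCast] at hz
  rw [map_mul, map_pow, map_intCast]
  linear_combination (-(φ u) ^ k) * hz + z * hk

theorem dvd_of_eval₂_eq_zero {D P : ℤ[X]} (hD : D.IsPrimitive) {c x y : ℚ} (hc : c ≠ 0)
    (hxy : x ≠ y) (hfac : D.map (Int.castRingHom ℚ) = C c * ((X - C x) * (X - C y)))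
    (hx : P.eval₂ (Int.castRingHom ℚ) x = 0) (hy : P.eval₂ (Int.castRingHom ℚ) y = 0) :
    D ∣ P := by
  rw [IsPrimitive.Int.dvd_iff_map_cast_dvd_map_cast _ _ hD, hfac,
    (isUnit_C.2 hc.isUnit).mul_left_dvd]
  exact (isCoprime_X_sub_C_of_isUnit_sub (sub_ne_zero.2 hxy).isUnit).mul_dvd
    (dvd_iff_isRoot.2 (by rwa [IsRoot, eval_map])) (dvd_iff_isRoot.2 (by rwa [IsRoot, eval_map]))

theorem toLaurent_dvd_of_eval₂_eq_zero {D : ℤ[X]} (hD : D.IsPrimitive) {c : ℚ} (hc : c ≠ 0)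
    {x y : ℚˣ} (hxy : (x : ℚ) ≠ y)
    (hfac : D.map (Int.castRingHom ℚ) = C c * ((X - C (x : ℚ)) * (X - C (y : ℚ))))
    {f : ℤ[T;T⁻¹]} (hx : eval₂ (Int.castRingHom ℚ) x f = 0)
    (hy : eval₂ (Int.castRingHom ℚ) y f = 0) : toLaurent D ∣ f := by
  obtain ⟨k, P, hP⟩ := f.exists_T_pow
  have hroot {z : ℚˣ} (hz : eval₂ (Int.castRingHom ℚ) z f = 0) :
      P.eval₂ (Int.castRingHom ℚ) z = 0 := by
    rw [← eval₂_toLaurent, hP, map_mul, hz, zero_mul]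
  obtain ⟨Q, rfl⟩ := dvd_of_eval₂_eq_zero hD hc hxy hfac (hroot hx) (hroot hy)
  exact (isUnit_T (k : ℤ)).dvd_mul_right.1 ⟨toLaurent Q, by rw [← hP, map_mul]⟩

theorem exists_eq_and_eq_of_dvd_sub {P R : Type*} [CommRing P] [CommRing R] {φ φ' : P →+* R}
    (hφ : Function.Surjective φ) (hφ' : Function.Surjective φ') {d : R}
    (hdiff : ∀ f, d ∣ φ' f - φ f) {A : P} {u : R} (hA : φ A = 0) (hA' : φ' A * u = d)
    {a b : R} (hab : d ∣ b - a) : ∃ f, φ f = a ∧ φ' f = b := by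
  obtain ⟨f, rfl⟩ := hφ a
  obtain ⟨e, he⟩ : d ∣ b - φ' f := by simpa using dvd_sub hab (hdiff f)
  obtain ⟨g, hg⟩ := hφ' (u * e)
  refine ⟨f + A * g, by simp [hA], ?_⟩
  rw [map_add, map_mul, hg, ← mul_assoc, hA']
  linear_combination -he

theorem bijOn_unitary {Λ R : Type*} [CommRing Λ] [CommRing R] (τ : Λ →+* Λ) {ψ ψ' : Λ →+* R}
    {d : R} (hψτ : ∀ x, ψ (τ x) = ψ' x) (hψ'τ : ∀ x, ψ' (τ x) = ψ x)
    (hker : ∀ x, ψ x = 0 → ψ' x = 0 → x = 0) (hdiff : ∀ x, d ∣ ψ' x - ψ x)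
    (hpair : ∀ a b, d ∣ b - a → ∃ x, ψ x = a ∧ ψ' x = b) :
    Set.BijOn ψ {x | x * τ x = 1} {y | IsUnit y ∧ ∃ c, y - Ring.inverse y = d * c} := by
  have mul_eq_one {x : Λ} (hx : x * τ x = 1) : ψ x * ψ' x = 1 := by
    rw [← hψτ, ← map_mul, hx, map_one]
  have inverse_eq {x : Λ} (hx : x * τ x = 1) : Ring.inverse (ψ x) = ψ' x :=
    Ring.inverse_unit (Units.mkOfMulEqOne _ _ (mul_eq_one hx))
  refine ⟨fun x hx => ?_, fun x hx y hy hxy => ?_, fun y ⟨hy, c, hc⟩ => ?_⟩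
  · obtain ⟨c, hc⟩ := hdiff x
    exact ⟨.of_mul_eq_one _ (mul_eq_one hx), -c, by rw [inverse_eq hx]; linear_combination -hc⟩
  · refine sub_eq_zero.1 (hker _ (by rw [map_sub, hxy, sub_self]) ?_)
    rw [map_sub, ← inverse_eq hx, ← inverse_eq hy, hxy, sub_self]
  · obtain ⟨x, rfl, hx'⟩ := hpair y (Ring.inverse y) ⟨-c, by linear_combination -hc⟩
    refine ⟨x, sub_eq_zero.1 (hker _ ?_ ?_), rfl⟩
    · rw [map_sub, map_mul, hψτ, hx', Ring.mul_inverse_cancel _ hy, map_one, sub_self]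
    · rw [map_sub, map_mul, hψ'τ, hx', Ring.inverse_mul_cancel _ hy, map_one, sub_self]

noncomputable def deltaPoly (n : ℤ) : ℤ[X] := C n * X ^ 2 - C (2 * n + 1) * X + C n

theorem toLaurent_deltaPoly (n : ℤ) : toLaurent (deltaPoly n) = DeltaL n := by
  simp only [deltaPoly, DeltaL, map_add, map_sub, map_mul, toLaurent_C, toLaurent_X_pow,
    toLaurent_X, Nat.cast_ofNat]

theorem isPrimitive_deltaPoly (n : ℤ) : (deltaPoly n).IsPrimitive := by
  intro r hr
  rw [C_dvd_iff_dvd_coeff] at hr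
  have h0 : r ∣ n := by simpa [deltaPoly] using hr 0
  have h1 : r ∣ -(2 * n + 1) := by
    simpa only [deltaPoly, coeff_add, coeff_sub, coeff_C_mul, coeff_X_pow, coeff_X_one, coeff_C,
      one_ne_zero, if_false, OfNat.one_ne_ofNat, mul_zero, mul_one, zero_sub, add_zero] using hr 1
  exact isUnit_of_dvd_one (by simpa using dvd_add h1 (h0.mul_left 2))

theorem map_deltaPoly {K : Type*} [CommRing K] {a b : Kˣ} {n : ℤ} (hn : (n : K) = a * b)
    (hab : ((b : K) - a) ^ 2 = 1) :
    (deltaPoly n).map (Int.castRingHom K) =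
      C (n : K) * ((X - C ((a * b⁻¹ : Kˣ) : K)) * (X - C ((b * a⁻¹ : Kˣ) : K))) := by
  have hsum : (n : K) * ((a * b⁻¹ : Kˣ) + (b * a⁻¹ : Kˣ)) = 2 * n + 1 := by
    simp only [Units.val_mul, hn]
    linear_combination (a * a : K) * b.mul_inv + (b * b : K) * a.mul_inv + hab
  have hprod : (n : K) * ((a * b⁻¹ : Kˣ) * (b * a⁻¹ : Kˣ)) = n := by
    rw [← Units.val_mul, show a * b⁻¹ * (b * a⁻¹) = 1 by group, Units.val_one, mul_one]
  calc (deltaPoly n).map (Int.castRingHom K)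
      = C (n : K) * X ^ 2 - C (2 * (n : K) + 1) * X + C (n : K) := by
        simp only [deltaPoly, Polynomial.map_add, Polynomial.map_sub, Polynomial.map_mul,
          Polynomial.map_pow, map_C, map_X, Int.coe_castRingHom, Int.cast_add, Int.cast_mul,
          Int.cast_ofNat, Int.cast_one]
    _ = C (n : K) * X ^ 2 - C ((n : K) * ((a * b⁻¹ : Kˣ) + (b * a⁻¹ : Kˣ))) * X +
          C ((n : K) * ((a * b⁻¹ : Kˣ) * (b * a⁻¹ : Kˣ))) := by rw [hsum, hprod]
    _ = _ := by simp only [map_mul, map_add]; ring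

theorem eval₂_DeltaL_eq_zero {K : Type*} [CommRing K] {a b : Kˣ} {n : ℤ} (hn : (n : K) = a * b)
    (hab : ((b : K) - a) ^ 2 = 1) : eval₂ (Int.castRingHom K) (a * b⁻¹) (DeltaL n) = 0 := by
  rw [← toLaurent_deltaPoly, eval₂_toLaurent, ← eval_map, map_deltaPoly hn hab]
  simp

namespace Lam

variable {n : ℤ} {R : Type*} [CommRing R]

noncomputable def eval (x : Rˣ) (hx : eval₂ (Int.castRingHom R) x (DeltaL n) = 0) :
    Lam n →+* R :=
  Ideal.Quotient.lift _ (eval₂ (Int.castRingHom R) x) fun f hf => by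
    obtain ⟨g, rfl⟩ := Ideal.mem_span_singleton'.1 hf
    rw [map_mul, hx, mul_zero]

@[simp]
theorem eval_mk {x : Rˣ} (hx : eval₂ (Int.castRingHom R) x (DeltaL n) = 0) (f : ℤ[T;T⁻¹]) :
    eval x hx (Qmk n f) = eval₂ (Int.castRingHom R) x f :=
  rfl

theorem ringHom_ext {f g : Lam n →+* R} (h : f (Qmk n (T 1)) = g (Qmk n (T 1))) : f = g :=
  Ideal.Quotient.ringHom_ext (ringHom_ext_int h)

theorem eval_comp_of_mul_eq_one {τ : Lam n →+* Lam n} (hτ : τ (Qmk n (T 1)) = Qmk n (T (-1)))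
    {x y : Rˣ} (hxy : x * y = 1) (hx : eval₂ (Int.castRingHom R) x (DeltaL n) = 0)
    (hy : eval₂ (Int.castRingHom R) y (DeltaL n) = 0) : (eval x hx).comp τ = eval y hy :=
  ringHom_ext (by simp [hτ, inv_eq_of_mul_eq_one_right hxy])

end Lam

namespace ZInv

variable (m : ℤ)

noncomputable def unitM : (ZInv m)ˣ :=
  (IsLocalization.Away.isUnit_of_dvd _ (dvd_mul_right m (m + 1))).unit

noncomputable def unitSucc : (ZInv m)ˣ :=
  (IsLocalization.Away.isUnit_of_dvd _ (dvd_mul_left (m + 1) m)).unit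

@[simp]
theorem val_unitM : (unitM m : ZInv m) = m := by
  simp [unitM]

@[simp]
theorem val_unitSucc : (unitSucc m : ZInv m) = m + 1 := by
  simp [unitSucc]

noncomputable def ratio : (ZInv m)ˣ := unitM m * (unitSucc m)⁻¹

theorem cast_eq_unitM_mul_unitSucc : ((m * (m + 1) : ℤ) : ZInv m) = unitM m * unitSucc m := by
  simp

theorem eval₂_ratio_DeltaL :
    eval₂ (Int.castRingHom (ZInv m)) (ratio m) (DeltaL (m * (m + 1))) = 0 :=
  eval₂_DeltaL_eq_zero (cast_eq_unitM_mul_unitSucc m) (by simp)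

theorem eval₂_ratio_inv_DeltaL :
    eval₂ (Int.castRingHom (ZInv m)) (ratio m)⁻¹ (DeltaL (m * (m + 1))) = 0 := by
  rw [ratio, mul_inv_rev, inv_inv]
  exact eval₂_DeltaL_eq_zero ((cast_eq_unitM_mul_unitSucc m).trans (mul_comm _ _)) (by simp)

theorem ratio_add_ratio_inv_sub_two_mul :
    ((ratio m : ZInv m) + ((ratio m)⁻¹ : (ZInv m)ˣ) - 2) * ((m * (m + 1) : ℤ) : ZInv m) = 1 := by
  have ha := (unitM m).mul_inv
  have hb := (unitSucc m).mul_inv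
  simp only [val_unitM, val_unitSucc] at ha hb
  simp only [ratio, mul_inv_rev, inv_inv, Units.val_mul, val_unitM, val_unitSucc]
  push_cast
  linear_combination (m : ZInv m) ^ 2 * hb + ((m : ZInv m) + 1) ^ 2 * ha

theorem dvd_ratio_inv_sub_ratio :
    ((2 * m + 1 : ℤ) : ZInv m) ∣ (((ratio m)⁻¹ : (ZInv m)ˣ) : ZInv m) - ratio m := by
  have ha := (unitM m).mul_inv
  have hb := (unitSucc m).mul_inv
  simp only [val_unitM, val_unitSucc] at ha hb
  refine ⟨((unitM m)⁻¹ : (ZInv m)ˣ) * ((unitSucc m)⁻¹ : (ZInv m)ˣ), ?_⟩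
  simp only [ratio, mul_inv_rev, inv_inv, Units.val_mul, val_unitM, val_unitSucc]
  push_cast
  linear_combination (-((m : ZInv m) + 1) * ((unitM m)⁻¹ : (ZInv m)ˣ)) * hb +
    ((m : ZInv m) * ((unitSucc m)⁻¹ : (ZInv m)ˣ)) * ha

theorem succ_mul_ratio_sub : ((m + 1 : ℤ) : ZInv m) * ratio m - m = 0 := by
  have hb := (unitSucc m).mul_inv
  simp only [val_unitSucc] at hb
  simp only [ratio, Units.val_mul, val_unitM]
  push_cast
  linear_combination (m : ZInv m) * hb

theorem succ_mul_ratio_inv_sub_mul :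
    (((m + 1 : ℤ) : ZInv m) * (((ratio m)⁻¹ : (ZInv m)ˣ) : ZInv m) - m) * m =
      ((2 * m + 1 : ℤ) : ZInv m) := by
  have ha := (unitM m).mul_inv
  simp only [val_unitM] at ha
  simp only [ratio, mul_inv_rev, inv_inv, Units.val_mul, val_unitSucc]
  push_cast
  linear_combination ((m : ZInv m) + 1) ^ 2 * ha

end ZInv

namespace Lam

variable (m : ℤ)

noncomputable def evalRatio : Lam (m * (m + 1)) →+* ZInv m :=
  eval (ZInv.ratio m) (ZInv.eval₂_ratio_DeltaL m)

noncomputable def evalRatioInv : Lam (m * (m + 1)) →+* ZInv m :=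
  eval (ZInv.ratio m)⁻¹ (ZInv.eval₂_ratio_inv_DeltaL m)

theorem evalRatio_surjective : Function.Surjective (evalRatio m) :=
  IsLocalization.Away.surjective_of_mul_eq_one (n := m * (m + 1)) _
    (u := Qmk _ (T 1 + T (-1) - 2))
    (by simpa [evalRatio, map_ofNat] using ZInv.ratio_add_ratio_inv_sub_two_mul m)

theorem evalRatioInv_surjective : Function.Surjective (evalRatioInv m) :=
  IsLocalization.Away.surjective_of_mul_eq_one (n := m * (m + 1)) _
    (u := Qmk _ (T 1 + T (-1) - 2))
    (by simpa [evalRatioInv, map_ofNat, add_comm] using ZInv.ratio_add_ratio_inv_sub_two_mul m)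

theorem dvd_evalRatioInv_sub_evalRatio (x : Lam (m * (m + 1))) :
    ((2 * m + 1 : ℤ) : ZInv m) ∣ evalRatioInv m x - evalRatio m x := by
  obtain ⟨f, rfl⟩ := Ideal.Quotient.mk_surjective x
  exact dvd_eval₂_sub_eval₂ (ZInv.dvd_ratio_inv_sub_ratio m) f

theorem exists_evalRatio_eq_and_evalRatioInv_eq {a b : ZInv m}
    (h : ((2 * m + 1 : ℤ) : ZInv m) ∣ b - a) :
    ∃ x, evalRatio m x = a ∧ evalRatioInv m x = b :=
  exists_eq_and_eq_of_dvd_sub (evalRatio_surjective m) (evalRatioInv_surjective m)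
    (dvd_evalRatioInv_sub_evalRatio m)
    (A := Qmk _ (((m + 1 : ℤ) : ℤ[T;T⁻¹]) * T 1 - (m : ℤ[T;T⁻¹])))
    (by simpa [evalRatio] using ZInv.succ_mul_ratio_sub m)
    (by simpa [evalRatioInv] using ZInv.succ_mul_ratio_inv_sub_mul m) h

theorem eq_zero_of_evalRatio_eq_zero (hm : m * (m + 1) ≠ 0) {x : Lam (m * (m + 1))}
    (h : evalRatio m x = 0) (h' : evalRatioInv m x = 0) : x = 0 := by
  obtain ⟨f, rfl⟩ := Ideal.Quotient.mk_surjective x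
  rw [Ideal.Quotient.eq_zero_iff_mem, Ideal.mem_span_singleton, ← toLaurent_deltaPoly]
  have hn : ((m * (m + 1) : ℤ) : ℚ) ≠ 0 := by exact_mod_cast hm
  let g : ZInv m →+* ℚ :=
    IsLocalization.Away.lift (m * (m + 1)) (g := Int.castRingHom ℚ) hn.isUnit
  have hg (k : ℤ) : g k = k := map_intCast g k
  set a := Units.map (g : ZInv m →* ℚ) (ZInv.unitM m)
  set b := Units.map (g : ZInv m →* ℚ) (ZInv.unitSucc m)
  have ha : (a : ℚ) = m := by simp [a, hg]
  have hb : (b : ℚ) = m + 1 := by simp [b, hg]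
  have hratio : Units.map (g : ZInv m →* ℚ) (ZInv.ratio m) = a * b⁻¹ := by
    simp [a, b, ZInv.ratio]
  have hratio' : Units.map (g : ZInv m →* ℚ) (ZInv.ratio m)⁻¹ = b * a⁻¹ := by
    simp [a, b, ZInv.ratio]
  refine toLaurent_dvd_of_eval₂_eq_zero (isPrimitive_deltaPoly _) hn ?_
    (map_deltaPoly (a := a) (b := b) (by rw [ha, hb]; push_cast; ring) (by rw [ha, hb]; ring)) ?_ ?_
  · -- the two roots coincide only if `m² = (m+1)²`, i.e. `2m + 1 = 0`
    intro hxy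
    simp only [Units.val_mul, Units.val_inv_eq_inv_val, ha, hb] at hxy
    have hm0 : (m : ℚ) ≠ 0 := by exact_mod_cast left_ne_zero_of_mul hm
    have hm1 : (m : ℚ) + 1 ≠ 0 := by exact_mod_cast right_ne_zero_of_mul hm
    field_simp at hxy
    have h2m : ((2 * m + 1 : ℤ) : ℚ) = 0 := by push_cast; linear_combination -hxy
    have := Int.cast_eq_zero.1 h2m
    omega
  · rw [← hratio, ← map_eval₂_intCast]
    simpa [evalRatio] using congrArg g h
  · rw [← hratio', ← map_eval₂_intCast]
    simpa [evalRatioInv] using congrArg g h'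

end Lam

/-- for reducible `Δₙ`, `n = m(m+1)` with `m ≥ 1`, the ring homomorphism
`Λₙ → ℤ[1/n]` given by `t ↦ m/(m+1)` maps the set of unitary units of `Λₙ` bijectively
onto `T = {x ∈ ℤ[1/n]ˣ : x - x⁻¹ ∈ (2m+1)·ℤ[1/n]}`. -/
theorem stmt17 (m : ℤ) (hm : 1 ≤ m)
    (τ : Lam (m * (m + 1)) →+* Lam (m * (m + 1)))
    (hτ : τ (Qmk (m * (m + 1)) (LaurentPolynomial.T 1)) =
      Qmk (m * (m + 1)) (LaurentPolynomial.T (-1))) :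
    ∃ ψ : Lam (m * (m + 1)) →+* ZInv m,
      ψ (Qmk (m * (m + 1)) (LaurentPolynomial.T 1)) =
        algebraMap ℤ (ZInv m) m * Ring.inverse (algebraMap ℤ (ZInv m) (m + 1)) ∧
      Set.BijOn ψ {x : Lam (m * (m + 1)) | x * τ x = 1}
        {y : ZInv m | IsUnit y ∧
          ∃ c : ZInv m, y - Ring.inverse y = algebraMap ℤ (ZInv m) (2 * m + 1) * c} := by
  have hψτ : (Lam.evalRatio m).comp τ = Lam.evalRatioInv m :=
    Lam.eval_comp_of_mul_eq_one hτ (mul_inv_cancel _) _ _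
  have hψ'τ : (Lam.evalRatioInv m).comp τ = Lam.evalRatio m :=
    Lam.eval_comp_of_mul_eq_one hτ (inv_mul_cancel _) _ _
  refine ⟨Lam.evalRatio m, ?_, ?_⟩
  · rw [eq_intCast, eq_intCast, Int.cast_add, Int.cast_one, ← ZInv.val_unitSucc,
      Ring.inverse_unit]
    simp [Lam.evalRatio, ZInv.ratio]
  · simp only [eq_intCast]
    exact bijOn_unitary τ (RingHom.congr_fun hψτ) (RingHom.congr_fun hψ'τ)
      (fun _ => Lam.eq_zero_of_evalRatio_eq_zero m (by positivity))
      (Lam.dvd_evalRatioInv_sub_evalRatio m)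
      (fun _ _ => Lam.exists_evalRatio_eq_and_evalRatioInv_eq m)
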